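/- Let a, b, n be odd positive integers with b < a < n and (a + b + 1)² > 4bn + 5. Set s = (a + b)/2 and let d be the decreasing sequence (a^s, b + 1, b^{n − s − 1}) of length n. Then d has even sum, maximal element a, minimal element b, and d fails the Erdős–Gallai inequality at k = s, i.e. Σ_{i=1}^s d_i > s(s − 1) + Σ_{i=s+1}^n min{s, d_i}; consequently d is nongraphic. -/

import Mathlib

/-!
Every finite simple graph satisfies the Erdős–Gallai inequality at every vertex set `S`: the
degrees inside `S` contribute at most `|S|(|S| - 1)`, and by double counting the edges leaving
`S` are counted on the other side, where vertex `j` receives at most `min |S| (deg j)` of them.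
For `d = (a^s, b + 1, b^{n-s-1})` with `s = (a + b)/2 > b`, the tail entries are below `s`, so the
inequality at `k = s` reads `s a ≤ s (s - 1) + (n - s) b + 1`. Substituting `a = 2s - b` turns
its failure into `s² + s > b n + 1`, i.e. `(a + b + 1)² > 4 b n + 5`.
-/

/-- A sequence of length `n` is graphic if it is the degree sequence of some
finite simple graph on `n` vertices. -/
def IsGraphic {n : ℕ} (d : Fin n → ℕ) : Prop :=
  ∃ G : SimpleGraph (Fin n), ∀ i, (G.neighborSet i).ncard = d i

/-- `caseIVSeq a b s : Fin n → ℕ` is the sequence `(a^s, b+1, b^{n-s-1})`: `s` copies of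
`a`, then a single entry `b + 1`, then `b`'s. -/
def caseIVSeq (a b s : ℕ) {n : ℕ} : Fin n → ℕ :=
  fun i => if (i : ℕ) < s then a else if (i : ℕ) = s then b + 1 else b

open Finset

namespace SimpleGraph

variable {V : Type*} [DecidableEq V] (G : SimpleGraph V) [DecidableRel G.Adj] (S : Finset V)

lemma degree_eq_card_filter_adj_add_card_filter_adj_compl [Fintype V] (i : V) :
    G.degree i = #{j ∈ S | G.Adj i j} + #{j ∈ Sᶜ | G.Adj i j} := by
  rw [← card_neighborFinset_eq_degree, neighborFinset_eq_filter, card_filter, card_filter,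
    card_filter, sum_add_sum_compl]

lemma sum_card_filter_adj_le : ∑ i ∈ S, #{j ∈ S | G.Adj i j} ≤ #S * (#S - 1) := by
  rw [← smul_eq_mul, ← sum_const]
  refine sum_le_sum fun i hi => ?_
  rw [← card_erase_of_mem hi]
  exact card_le_card fun j hj => by
    rw [mem_filter] at hj
    exact mem_erase.2 ⟨(G.ne_of_adj hj.2).symm, hj.1⟩

lemma sum_card_filter_adj_compl_le [Fintype V] :
    ∑ i ∈ S, #{j ∈ Sᶜ | G.Adj i j} ≤ ∑ j ∈ Sᶜ, min #S (G.degree j) := by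
  change ∑ i ∈ S, #(Sᶜ.bipartiteAbove G.Adj i) ≤ _
  rw [sum_card_bipartiteAbove_eq_sum_card_bipartiteBelow]
  refine sum_le_sum fun j _ => le_min (card_filter_le _ _) ?_
  rw [← card_neighborFinset_eq_degree]
  exact card_le_card fun i hi => by
    rw [bipartiteBelow, mem_filter] at hi
    exact (mem_neighborFinset G j i).2 hi.2.symm

theorem sum_degree_le_card_mul_add_sum_min [Fintype V] :
    ∑ i ∈ S, G.degree i ≤ #S * (#S - 1) + ∑ j ∈ Sᶜ, min #S (G.degree j) := by
  rw [sum_congr rfl fun i _ => G.degree_eq_card_filter_adj_add_card_filter_adj_compl S i,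
    sum_add_distrib]
  exact add_le_add (G.sum_card_filter_adj_le S) (G.sum_card_filter_adj_compl_le S)

end SimpleGraph

theorem IsGraphic.sum_le_card_mul_add_sum_min {n : ℕ} {d : Fin n → ℕ} (hd : IsGraphic d)
    (S : Finset (Fin n)) :
    ∑ i ∈ S, d i ≤ #S * (#S - 1) + ∑ j ∈ Sᶜ, min #S (d j) := by
  classical
  obtain ⟨G, hG⟩ := hd
  have hdeg : ∀ i, d i = G.degree i := fun i => by
    rw [← hG i, ← SimpleGraph.card_neighborFinset_eq_degree, SimpleGraph.neighborFinset_def,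
      Set.ncard_eq_toFinset_card']
  simp only [hdeg]
  exact G.sum_degree_le_card_mul_add_sum_min S

theorem IsGraphic.sum_filter_val_lt_le {n : ℕ} {d : Fin n → ℕ} (hd : IsGraphic d) {k : ℕ}
    (hk : k ≤ n) :
    ∑ i ∈ univ.filter (fun i : Fin n => (i : ℕ) < k), d i ≤
      k * (k - 1) + ∑ i ∈ univ.filter (fun i : Fin n => k ≤ (i : ℕ)), min k (d i) := by
  have h := hd.sum_le_card_mul_add_sum_min (univ.filter fun i : Fin n => (i : ℕ) < k)
  simpa only [compl_filter, not_lt, Fin.card_filter_val_lt, min_eq_right hk] using h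

lemma Fin.card_filter_le_val {n k : ℕ} : #{i : Fin n | k ≤ (i : ℕ)} = n - k := by
  have h := card_filter_add_card_filter_not (s := univ) fun i : Fin n => (i : ℕ) < k
  simp only [Fin.card_filter_val_lt, not_lt, card_univ, Fintype.card_fin] at h
  omega

section

variable {a b s n : ℕ}

lemma caseIVSeq_antitone (hba : b < a) : Antitone (caseIVSeq a b s (n := n)) := by
  intro i j hij
  have hij' : (i : ℕ) ≤ j := hij
  simp only [caseIVSeq]
  split_ifs <;> omega

lemma sum_caseIVSeq_filter_lt (hsn : s ≤ n) :
    ∑ i ∈ univ.filter (fun i : Fin n => (i : ℕ) < s), caseIVSeq a b s i = s * a := by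
  have hhead : ∀ i ∈ univ.filter (fun i : Fin n => (i : ℕ) < s), caseIVSeq a b s i = a :=
    fun i hi => if_pos (mem_filter.1 hi).2
  rw [sum_congr rfl hhead, sum_const, Fin.card_filter_val_lt,
    min_eq_right hsn, smul_eq_mul]

lemma sum_caseIVSeq_filter_le (hsn : s < n) :
    ∑ i ∈ univ.filter (fun i : Fin n => s ≤ (i : ℕ)), caseIVSeq a b s i = (n - s) * b + 1 := by
  have hmem : (⟨s, hsn⟩ : Fin n) ∈ univ.filter (fun i : Fin n => s ≤ (i : ℕ)) := by simp
  have hrest : ∀ i ∈ (univ.filter (fun i : Fin n => s ≤ (i : ℕ))).erase ⟨s, hsn⟩,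
      caseIVSeq a b s i = b := fun i hi => by
    simp only [mem_erase, mem_filter, ne_eq, Fin.ext_iff] at hi
    simp only [caseIVSeq]
    split_ifs <;> omega
  rw [← add_sum_erase _ _ hmem, sum_congr rfl hrest, sum_const, card_erase_of_mem hmem,
    Fin.card_filter_le_val, smul_eq_mul]
  simp only [caseIVSeq, lt_irrefl, if_false, if_true]
  obtain ⟨m, hm⟩ : ∃ m, n - s = m + 1 := ⟨n - s - 1, by omega⟩
  rw [hm, Nat.add_sub_cancel]
  ring

lemma min_caseIVSeq_eq (hbs : b < s) {i : Fin n} (hi : s ≤ i) :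
    min s (caseIVSeq a b s i) = caseIVSeq a b s i := by
  simp only [caseIVSeq]
  split_ifs <;> omega

lemma even_mul_add_sub_mul_add_one (ha : Odd a) (hb : Odd b) (hn : Odd n) (hsn : s ≤ n) :
    Even (s * a + ((n - s) * b + 1)) := by
  rw [← Nat.not_even_iff_odd] at ha hb hn
  simp only [Nat.even_add, Nat.even_add_one, Nat.even_mul, Nat.even_sub hsn, ha, hb, hn]
  tauto

lemma mul_pred_add_sub_mul_add_one_lt (hab : a + b = 2 * s) (hsn : s ≤ n)
    (hgt : (a + b + 1) ^ 2 > 4 * (b * n) + 5) : s * (s - 1) + ((n - s) * b + 1) < s * a := by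
  have hs : 1 ≤ s := by nlinarith
  zify [hs, hsn] at *
  nlinarith

end

/-- Case (IV) of sharpness: let `a`, `b`, `n` be odd positive integers with `b < a < n`
and `(a+b+1)² > 4bn + 5`, and set `s = (a+b)/2`. Then the decreasing sequence
`d = (a^s, b+1, b^{n-s-1})` of length `n` has even sum, maximal element `a`, minimal
element `b`, fails the Erdős–Gallai inequality at `k = s`, and is nongraphic. -/
theorem sharpness_case_IV (a b n : ℕ) (hba : b < a) (han : a < n)
    (ha' : Odd a) (hb' : Odd b) (hn' : Odd n)
    (hgt : (a + b + 1) ^ 2 > 4 * (b * n) + 5) :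
    Antitone (caseIVSeq a b ((a + b) / 2) (n := n)) ∧
      Even (∑ i : Fin n, caseIVSeq a b ((a + b) / 2) i) ∧
      caseIVSeq a b ((a + b) / 2) (n := n) ⟨0, by omega⟩ = a ∧
      caseIVSeq a b ((a + b) / 2) (n := n) ⟨n - 1, by omega⟩ = b ∧
      (∑ i ∈ Finset.univ.filter (fun i : Fin n => (i : ℕ) < (a + b) / 2),
          caseIVSeq a b ((a + b) / 2) i >
        (a + b) / 2 * ((a + b) / 2 - 1) +
          ∑ i ∈ Finset.univ.filter (fun i : Fin n => (a + b) / 2 ≤ (i : ℕ)),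
            min ((a + b) / 2) (caseIVSeq a b ((a + b) / 2) i)) ∧
      ¬ IsGraphic (caseIVSeq a b ((a + b) / 2) (n := n)) := by
  set s := (a + b) / 2
  have hab : a + b = 2 * s := by
    have ha2 := Nat.odd_iff.1 ha'
    have hb2 := Nat.odd_iff.1 hb'
    omega
  have hbs : b < s := by omega
  have hsn : s < n := by omega
  have hviol : ∑ i ∈ univ.filter (fun i : Fin n => (i : ℕ) < s), caseIVSeq a b s i >
      s * (s - 1) +
        ∑ i ∈ univ.filter (fun i : Fin n => s ≤ (i : ℕ)), min s (caseIVSeq a b s i) := by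
    rw [sum_congr rfl fun i hi => min_caseIVSeq_eq hbs (mem_filter.1 hi).2,
      sum_caseIVSeq_filter_lt hsn.le, sum_caseIVSeq_filter_le hsn]
    exact mul_pred_add_sub_mul_add_one_lt hab hsn.le hgt
  refine ⟨caseIVSeq_antitone hba, ?_, if_pos (show 0 < s by omega), ?_, hviol,
    fun hG => (hG.sum_filter_val_lt_le hsn.le).not_gt hviol⟩
  · rw [← sum_filter_add_sum_filter_not univ fun i : Fin n => (i : ℕ) < s]
    simp only [not_lt]
    rw [sum_caseIVSeq_filter_lt hsn.le, sum_caseIVSeq_filter_le hsn]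
    exact even_mul_add_sub_mul_add_one ha' hb' hn' hsn.le
  · simp only [caseIVSeq]
    split_ifs <;> omega
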